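/- arXiv:1804.08099 — 2 statements merged into one kernel-verified Lean document; each statement's English description precedes it below -/
import Mathlib

section
/- Let P ∈ ℂ[X₁,…,X_d] be a nonzero polynomial and let X₁ ⊆ X₂ ⊆ ℝ^d be open sets such that X₂ is P-convex for supports. If every φ ∈ C_c^∞(X₂, ℂ) with supp P̌(D)φ ⊆ X₁ satisfies supp φ ⊆ X₁, then X₁ is P-convex for supports. -/
open Filter MvPolynomial

noncomputable section

/-- Partial derivative in coordinate direction `i`. -/
noncomputable def pd {d : ℕ} (i : Fin d) (f : EuclideanSpace ℝ (Fin d) → ℂ) :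
    EuclideanSpace ℝ (Fin d) → ℂ :=
  fun x => fderiv ℝ f x (EuclideanSpace.single i 1)

/-- Iterated partial derivative `∂^α`. -/
noncomputable def pdPow {d : ℕ} (α : Fin d → ℕ) (f : EuclideanSpace ℝ (Fin d) → ℂ) :
    EuclideanSpace ℝ (Fin d) → ℂ :=
  (((List.finRange d).map fun i => (pd i)^[α i]).foldr (· ∘ ·) id) f

/-- The constant-coefficient differential operator
`P(D)f = Σ_{α} a_α (−i)^{|α|} ∂^α f`. -/
noncomputable def PD {d : ℕ} (P : MvPolynomial (Fin d) ℂ) (f : EuclideanSpace ℝ (Fin d) → ℂ) :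
    EuclideanSpace ℝ (Fin d) → ℂ :=
  fun x => ∑ α ∈ P.support, P.coeff α * (-Complex.I) ^ (α.sum fun _ e => e) * pdPow (⇑α) f x

/-- `P̌(ξ) = P(−ξ)`. -/
noncomputable def checkPoly {d : ℕ} (P : MvPolynomial (Fin d) ℂ) : MvPolynomial (Fin d) ℂ :=
  MvPolynomial.aeval (fun i => -MvPolynomial.X i) P

/-- Value of the principal part `P_m(x) = Σ_{|α| = deg P} a_α x^α` at a real point. -/
noncomputable def principalValue {d : ℕ} (P : MvPolynomial (Fin d) ℂ)
    (x : EuclideanSpace ℝ (Fin d)) : ℂ :=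
  ∑ α ∈ P.support.filter fun α => (α.sum fun _ e => e) = P.totalDegree,
    P.coeff α * ∏ i, (x i : ℂ) ^ α i

/-- Distance between two sets, valued in `[0,∞]` (so `= ∞` if one of them is empty). -/
noncomputable def setEDist {d : ℕ} (A B : Set (EuclideanSpace ℝ (Fin d))) : ENNReal :=
  ⨅ x ∈ A, EMetric.infEdist x B

/-- `X` is `P`-convex for supports. -/
def PConvexSupp {d : ℕ} (P : MvPolynomial (Fin d) ℂ) (X : Set (EuclideanSpace ℝ (Fin d))) :
    Prop :=
  ∀ φ : EuclideanSpace ℝ (Fin d) → ℂ, ContDiff ℝ (⊤ : ℕ∞) φ → HasCompactSupport φ →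
    tsupport φ ⊆ X →
    setEDist (tsupport φ) Xᶜ = setEDist (tsupport (PD (checkPoly P) φ)) Xᶜ

/-- `u ∈ ℰ_P(X)`: `u` is smooth on `X` and satisfies `P(D)u = 0` on `X`. -/
def SolOn {d : ℕ} (P : MvPolynomial (Fin d) ℂ) (X : Set (EuclideanSpace ℝ (Fin d)))
    (u : EuclideanSpace ℝ (Fin d) → ℂ) : Prop :=
  ContDiffOn ℝ (⊤ : ℕ∞) u X ∧ ∀ x ∈ X, PD P u x = 0

/-- `(X₁, X₂)` is a `P`-Runge pair. -/
def RungePair {d : ℕ} (P : MvPolynomial (Fin d) ℂ)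
    (X₁ X₂ : Set (EuclideanSpace ℝ (Fin d))) : Prop :=
  ∀ u, SolOn P X₁ u → ∀ K : Set (EuclideanSpace ℝ (Fin d)), IsCompact K → K ⊆ X₁ →
    ∀ l : ℕ, ∀ ε : ℝ, 0 < ε →
      ∃ v, SolOn P X₂ v ∧ ∀ x ∈ K, ∀ α : Fin d → ℕ, (∑ i, α i) ≤ l →
        ‖pdPow α u x - pdPow α v x‖ < ε

/-- `X₂` contains a compact connected component of `(ℝ^d ∖ X₁) ∩ {x : x_i = c}`
for some `c ∈ ℝ`. -/
def TrappedComponent {d : ℕ} (X₁ X₂ : Set (EuclideanSpace ℝ (Fin d))) (i : Fin d) : Prop :=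
  ∃ c : ℝ, ∃ x ∈ X₁ᶜ ∩ {y : EuclideanSpace ℝ (Fin d) | y i = c},
    IsCompact (connectedComponentIn (X₁ᶜ ∩ {y : EuclideanSpace ℝ (Fin d) | y i = c}) x) ∧
    connectedComponentIn (X₁ᶜ ∩ {y : EuclideanSpace ℝ (Fin d) | y i = c}) x ⊆ X₂

/-! Translating `φ` by `t • h` (`t ∈ [0, 1]`, `‖h‖ < δ := dist(supp P̌(D)φ, ∁X₁)`) keeps
`supp P̌(D)φ_t` at distance at least `ε := δ - ‖h‖ > 0` from `∁X₁ ⊇ ∁X₂`. Whenever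
`supp φ_t ⊆ X₂`, `P`-convexity of `X₂` therefore puts `supp φ_t` at distance `≥ ε` from `∁X₂`, so
steps of length `< ε` cannot leave `X₂`: walking from `t = 0` to `t = 1` gives `supp φ_1 ⊆ X₂`.
Now `supp P̌(D)φ_1 ⊆ X₁`, and the hypothesis gives `supp φ_1 = supp φ + h ⊆ X₁`. -/

open Metric Set

section

variable {E : Type*} [NormedAddCommGroup E]

lemma le_infEDist_compl_of_forall_add_mem {Y : Set E} {x : E} {δ : ENNReal}
    (h : ∀ v : E, ‖v‖ₑ < δ → x + v ∈ Y) : δ ≤ infEDist x Yᶜ := by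
  by_contra! hlt
  obtain ⟨y, hy, hxy⟩ := infEDist_lt_iff.1 hlt
  rw [edist_comm, edist_eq_enorm_sub] at hxy
  exact hy (by simpa using h (y - x) hxy)

lemma mem_of_edist_lt_infEDist_compl {Y : Set E} {x y : E} (hxy : edist x y < infEDist x Yᶜ) :
    y ∈ Y := by
  by_contra hy
  exact (infEDist_le_edist_of_mem (mem_compl hy)).not_gt hxy

lemma add_mem_of_uniform_margin [NormedSpace ℝ E] {K Y : Set E} {v : E} {ε : ENNReal}
    (hε : 0 < ε) (hK : K ⊆ Y)
    (hmargin : ∀ t ∈ Icc (0 : ℝ) 1, (∀ x ∈ K, x + t • v ∈ Y) →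
      ∀ x ∈ K, ε ≤ infEDist (x + t • v) Yᶜ) :
    ∀ x ∈ K, x + v ∈ Y := by
  obtain ⟨N, hN⟩ := ENNReal.exists_nat_mul_gt hε.ne' (enorm_ne_top (x := v))
  have hN0 : (N : ℝ) ≠ 0 := by
    rintro h
    simp [Nat.cast_eq_zero.1 h] at hN
  have hstep : ‖((N : ℝ)⁻¹) • v‖ₑ < ε := by
    rw [enorm_smul, enorm_inv hN0, Real.enorm_natCast, mul_comm, ← div_eq_mul_inv]
    exact (ENNReal.div_lt_iff (by simp_all) (by simp)).2 (by rwa [mul_comm])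
  suffices h : ∀ k ≤ N, ∀ x ∈ K, x + ((k : ℝ) / N) • v ∈ Y by
    simpa [div_self hN0] using h N le_rfl
  intro k
  induction k with
  | zero => exact fun _ x hx => by simpa using hK hx
  | succ k ih =>
    intro hk x hx
    have ht : (k : ℝ) / N ∈ Icc (0 : ℝ) 1 :=
      ⟨by positivity, div_le_one_of_le₀ (by exact_mod_cast (k.le_succ.trans hk)) (by positivity)⟩
    refine mem_of_edist_lt_infEDist_compl
      (lt_of_lt_of_le ?_ (hmargin _ ht (ih (by omega)) x hx))
    have hdiff : x + (((k + 1 : ℕ) : ℝ) / N) • v - (x + ((k : ℝ) / N) • v) = (N : ℝ)⁻¹ • v := by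
      rw [Nat.cast_succ, add_div, add_smul, one_div]
      abel
    rwa [edist_comm, edist_eq_enorm_sub, hdiff]

end

lemma tsupport_comp_sub_const {G M : Type*} [AddGroup G] [TopologicalSpace G]
    [IsTopologicalAddGroup G] [Zero M] (f : G → M) (c : G) :
    tsupport (fun x => f (x - c)) = (· - c) ⁻¹' tsupport f :=
  tsupport_comp_eq_preimage f (Homeomorph.subRight c)

section SetEDist

variable {d : ℕ} {A B : Set (EuclideanSpace ℝ (Fin d))}

lemma setEDist_le_infEDist {x : EuclideanSpace ℝ (Fin d)} (hx : x ∈ A) :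
    setEDist A B ≤ infEDist x B :=
  iInf₂_le x hx

lemma le_setEDist_iff {c : ENNReal} : c ≤ setEDist A B ↔ ∀ x ∈ A, c ≤ infEDist x B :=
  le_iInf₂_iff

lemma setEDist_anti_left {A' : Set (EuclideanSpace ℝ (Fin d))} (h : A' ⊆ A) :
    setEDist A B ≤ setEDist A' B :=
  biInf_mono h

lemma setEDist_sub_enorm_le_infEDist {v y : EuclideanSpace ℝ (Fin d)} (hy : y - v ∈ A) :
    setEDist A B - ‖v‖ₑ ≤ infEDist y B := by
  have hdist : edist (y - v) y = ‖v‖ₑ := by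
    rw [edist_eq_enorm_sub, sub_sub_cancel_left, enorm_neg]
  exact tsub_le_iff_right.2 ((setEDist_le_infEDist hy).trans
    (hdist ▸ infEDist_le_infEDist_add_edist))

end SetEDist

section DifferentialOperators

variable {d : ℕ}

lemma pdPow_induction (p : ((EuclideanSpace ℝ (Fin d) → ℂ) → EuclideanSpace ℝ (Fin d) → ℂ) → Prop)
    (hid : p id) (hcomp : ∀ T S, p T → p S → p (T ∘ S)) (hpd : ∀ i, p (pd i)) (α : Fin d → ℕ) :
    p (pdPow α) := by
  change p (((List.finRange d).map fun i => (pd i)^[α i]).foldr (· ∘ ·) id)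
  have hiterate : ∀ T, p T → ∀ k, p T^[k] := by
    intro T hT k
    induction k with
    | zero => exact hid
    | succ k ih => exact Function.iterate_succ T k ▸ hcomp _ _ ih hT
  induction List.finRange d with
  | nil => exact hid
  | cons i l ih => exact hcomp ((pd i)^[α i]) _ (hiterate _ (hpd i) (α i)) ih

lemma contDiff_pdPow (α : Fin d → ℕ) {f : EuclideanSpace ℝ (Fin d) → ℂ}
    (hf : ContDiff ℝ (⊤ : ℕ∞) f) : ContDiff ℝ (⊤ : ℕ∞) (pdPow α f) :=
  pdPow_induction (fun T => ∀ f, ContDiff ℝ (⊤ : ℕ∞) f → ContDiff ℝ (⊤ : ℕ∞) (T f))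
    (fun _ hf => hf) (fun _ _ hT hS f hf => hT _ (hS f hf))
    (fun _ _ hf => (hf.fderiv_right (by exact_mod_cast le_top)).clm_apply contDiff_const) α f hf

lemma tsupport_pdPow_subset (α : Fin d → ℕ) (f : EuclideanSpace ℝ (Fin d) → ℂ) :
    tsupport (pdPow α f) ⊆ tsupport f :=
  pdPow_induction (fun T => ∀ f, tsupport (T f) ⊆ tsupport f)
    (fun _ => subset_rfl) (fun _ _ hT hS f => (hT _).trans (hS f))
    (fun _ f => closure_minimal (fun x hx => support_fderiv_subset ℝ
      fun h => hx (by simp [pd, h])) isClosed_closure) α f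

lemma pdPow_comp_sub_const (α : Fin d → ℕ) (f : EuclideanSpace ℝ (Fin d) → ℂ)
    (c : EuclideanSpace ℝ (Fin d)) :
    pdPow α (fun x => f (x - c)) = fun x => pdPow α f (x - c) :=
  pdPow_induction (fun T => ∀ f c, T (fun x => f (x - c)) = fun x => T f (x - c))
    (fun _ _ => rfl) (fun T S hT hS f c => by simp only [Function.comp_apply, hS, hT])
    (fun _ _ _ => funext fun _ => by simp only [pd, fderiv_comp_sub]) α f c

lemma tsupport_PD_subset (Q : MvPolynomial (Fin d) ℂ) (f : EuclideanSpace ℝ (Fin d) → ℂ) :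
    tsupport (PD Q f) ⊆ tsupport f := by
  refine closure_minimal (fun x hx => ?_) isClosed_closure
  obtain ⟨α, -, hα⟩ := Finset.exists_ne_zero_of_sum_ne_zero hx
  exact tsupport_pdPow_subset α f (subset_closure (right_ne_zero_of_mul hα))

lemma PD_comp_sub_const (Q : MvPolynomial (Fin d) ℂ) (f : EuclideanSpace ℝ (Fin d) → ℂ)
    (c : EuclideanSpace ℝ (Fin d)) : PD Q (fun x => f (x - c)) = fun x => PD Q f (x - c) := by
  funext x
  simp only [PD, pdPow_comp_sub_const]

end DifferentialOperators

lemma add_mem_of_enorm_lt_setEDist {d : ℕ} {P : MvPolynomial (Fin d) ℂ}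
    {X₁ X₂ : Set (EuclideanSpace ℝ (Fin d))} (h12 : X₁ ⊆ X₂) (hc₂ : PConvexSupp P X₂)
    (hsupp : ∀ φ : EuclideanSpace ℝ (Fin d) → ℂ, ContDiff ℝ (⊤ : ℕ∞) φ →
      HasCompactSupport φ → tsupport φ ⊆ X₂ → tsupport (PD (checkPoly P) φ) ⊆ X₁ →
      tsupport φ ⊆ X₁)
    {φ : EuclideanSpace ℝ (Fin d) → ℂ} (hφ : ContDiff ℝ (⊤ : ℕ∞) φ) (hcs : HasCompactSupport φ)
    (hsub : tsupport φ ⊆ X₁) {h : EuclideanSpace ℝ (Fin d)}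
    (hh : ‖h‖ₑ < setEDist (tsupport (PD (checkPoly P) φ)) X₁ᶜ) :
    ∀ x ∈ tsupport φ, x + h ∈ X₁ := by
  set ε := setEDist (tsupport (PD (checkPoly P) φ)) X₁ᶜ - ‖h‖ₑ
  have hε : 0 < ε := tsub_pos_of_lt hh
  set φt : ℝ → EuclideanSpace ℝ (Fin d) → ℂ := fun t x => φ (x - t • h)
  have hφt_smooth (t : ℝ) : ContDiff ℝ (⊤ : ℕ∞) (φt t) :=
    hφ.comp (contDiff_id.sub contDiff_const)
  have hφt_supp (t : ℝ) : tsupport (φt t) = (· - t • h) ⁻¹' tsupport φ :=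
    tsupport_comp_sub_const φ (t • h)
  have hφt_cs (t : ℝ) : HasCompactSupport (φt t) := hcs.comp_homeomorph (Homeomorph.subRight _)
  have hPDφt_margin : ∀ t ∈ Icc (0 : ℝ) 1, ∀ y ∈ tsupport (PD (checkPoly P) (φt t)),
      ε ≤ infEDist y X₁ᶜ := by
    intro t ht y hy
    rw [PD_comp_sub_const, tsupport_comp_sub_const] at hy
    refine le_trans (tsub_le_tsub_left ?_ _) (setEDist_sub_enorm_le_infEDist hy)
    have ht_enorm : ‖t‖ₑ ≤ 1 := by simpa [Real.enorm_eq_ofReal_abs, abs_of_nonneg ht.1] using ht.2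
    exact enorm_smul t h ▸ mul_le_of_le_one_left' ht_enorm
  have hX₂ : ∀ x ∈ tsupport φ, x + h ∈ X₂ := by
    refine add_mem_of_uniform_margin hε (hsub.trans h12) fun t ht hin x hx => ?_
    have hφt_X₂ : tsupport (φt t) ⊆ X₂ := fun y hy => by
      simpa using hin _ ((hφt_supp t).subset hy)
    calc ε ≤ setEDist (tsupport (PD (checkPoly P) (φt t))) X₂ᶜ :=
          le_setEDist_iff.2 fun y hy =>
            (hPDφt_margin t ht y hy).trans (infEDist_anti (compl_subset_compl.2 h12))
      _ = setEDist (tsupport (φt t)) X₂ᶜ := (hc₂ _ (hφt_smooth t) (hφt_cs t) hφt_X₂).symm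
      _ ≤ infEDist (x + t • h) X₂ᶜ := setEDist_le_infEDist (by simpa [hφt_supp] using hx)
  have hPDφ₁ : tsupport (PD (checkPoly P) (φt 1)) ⊆ X₁ := fun y hy => by
    by_contra hy₁
    have := hPDφt_margin 1 ⟨zero_le_one, le_rfl⟩ y hy
    rw [infEDist_zero_of_mem hy₁] at this
    exact hε.ne' (le_zero_iff.1 this)
  have hφ₁ := hsupp (φt 1) (hφt_smooth 1) (hφt_cs 1)
    (fun y hy => by simpa using hX₂ _ ((hφt_supp 1).subset hy)) hPDφ₁
  exact fun x hx => hφ₁ (by simpa [hφt_supp] using hx)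

theorem pconvex_of_support_condition_general {d : ℕ} (P : MvPolynomial (Fin d) ℂ)
    (X₁ X₂ : Set (EuclideanSpace ℝ (Fin d))) (h12 : X₁ ⊆ X₂)
    (hc₂ : PConvexSupp P X₂)
    (hsupp : ∀ φ : EuclideanSpace ℝ (Fin d) → ℂ, ContDiff ℝ (⊤ : ℕ∞) φ →
      HasCompactSupport φ → tsupport φ ⊆ X₂ → tsupport (PD (checkPoly P) φ) ⊆ X₁ →
      tsupport φ ⊆ X₁) :
    PConvexSupp P X₁ := by
  intro φ hφ hcs hsub
  refine le_antisymm (setEDist_anti_left (tsupport_PD_subset _ φ)) ?_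
  exact le_setEDist_iff.2 fun x hx => le_infEDist_compl_of_forall_add_mem fun h hh =>
    add_mem_of_enorm_lt_setEDist h12 hc₂ hsupp hφ hcs hsub hh x hx

/-- For `P ≠ 0` and open `X₁ ⊆ X₂` with `X₂` `P`-convex for supports:
if every `φ ∈ 𝒟(X₂)` with `supp P̌(D)φ ⊆ X₁` has `supp φ ⊆ X₁`, then `X₁` is `P`-convex
for supports. -/
theorem pconvex_of_support_condition {d : ℕ} (P : MvPolynomial (Fin d) ℂ) (hP : P ≠ 0)
    (X₁ X₂ : Set (EuclideanSpace ℝ (Fin d))) (h12 : X₁ ⊆ X₂)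
    (hX₁ : IsOpen X₁) (hX₂ : IsOpen X₂) (hc₂ : PConvexSupp P X₂)
    (hsupp : ∀ φ : EuclideanSpace ℝ (Fin d) → ℂ, ContDiff ℝ (⊤ : ℕ∞) φ →
      HasCompactSupport φ → tsupport φ ⊆ X₂ → tsupport (PD (checkPoly P) φ) ⊆ X₁ →
      tsupport φ ⊆ X₁) :
    PConvexSupp P X₁ :=
  pconvex_of_support_condition_general P X₁ X₂ h12 hc₂ hsupp

end
end

section
/- Let d ≥ 2, m ≥ 1, and Q₀,…,Q_m ∈ ℂ[X₁,…,X_{d−1}] with Q_m = 1. Let Y ⊆ ℝ^{d−1} be open and h₀,…,h_{m−1} ∈ C^∞(Y, ℂ). Then for every 0 ≤ s ≤ m−1: Σ_{j=0}^{s} Σ_{k=m−1−s}^{m−1−j} Q_{j+k+1}(D) 𝒞_{k+s}(h_j) = h_s. -/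
open Filter MvPolynomial

noncomputable section

/-- The recursively defined operators `𝒞_l`. -/
noncomputable def CC {n : ℕ} (m : ℕ) (Q : ℕ → MvPolynomial (Fin n) ℂ) (l : ℕ)
    (f : EuclideanSpace ℝ (Fin n) → ℂ) : EuclideanSpace ℝ (Fin n) → ℂ :=
  if l + 1 < m then 0
  else if l + 1 = m then f
  else -∑ k : Fin m, PD (Q k.1) (CC m Q (k.1 + l - m) f)
termination_by l
decreasing_by
  simp_wf
  have := k.2
  omega

/-! For `j < s` the top term of the inner sum is `Q_m(D) 𝒞_{m-1+s-j}(h_j) = 𝒞_{m-1+s-j}(h_j)`;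
unfolding the recursion of `𝒞` there cancels the remaining terms, since `𝒞_l = 0` for
`l < m - 1`. Only the diagonal term `j = s` survives, and it is `𝒞_{m-1}(h_s) = h_s`. -/

open Finset

lemma pd_zero {d : ℕ} (i : Fin d) : pd i 0 = 0 := by
  funext x
  simp [pd]

lemma pdPow_zero_right {d : ℕ} (α : Fin d → ℕ) :
    pdPow α (0 : EuclideanSpace ℝ (Fin d) → ℂ) = 0 := by
  unfold pdPow
  induction List.finRange d with
  | nil => rfl
  | cons i t ih =>
    simp only [List.map_cons, List.foldr_cons, Function.comp_apply, ih]
    exact Function.iterate_fixed (pd_zero i) (α i)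

lemma pdPow_zero_left {d : ℕ} (f : EuclideanSpace ℝ (Fin d) → ℂ) : pdPow 0 f = f := by
  unfold pdPow
  induction List.finRange d with
  | nil => rfl
  | cons i t ih => simpa using ih

lemma PD_zero_right {d : ℕ} (P : MvPolynomial (Fin d) ℂ) : PD P 0 = 0 := by
  funext x
  simp [PD, pdPow_zero_right]

lemma PD_one {d : ℕ} (f : EuclideanSpace ℝ (Fin d) → ℂ) : PD 1 f = f := by
  funext x
  simp [PD, pdPow_zero_left]

section CC

variable {n m l : ℕ} (Q : ℕ → MvPolynomial (Fin n) ℂ)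
  (f : EuclideanSpace ℝ (Fin n) → ℂ)

lemma CC_of_lt (hl : l + 1 < m) : CC m Q l f = 0 := by
  rw [CC, if_pos hl]

lemma CC_of_add_one_eq (hl : l + 1 = m) : CC m Q l f = f := by
  rw [CC, if_neg (by omega), if_pos hl]

lemma CC_of_le (hl : m ≤ l) :
    CC m Q l f = -∑ k : Fin m, PD (Q k.1) (CC m Q (k.1 + l - m) f) := by
  rw [CC, if_neg (by omega), if_neg (by omega)]

lemma sum_Icc_PD_CC_eq_zero (hQm : Q m = 1) (t : ℕ) :
    ∑ k ∈ Icc (m - 1 - t) m, PD (Q k) (CC m Q (k + t) f) = 0 := by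
  have hrec : CC m Q (m + t) f = -∑ k ∈ range m, PD (Q k) (CC m Q (k + t) f) := by
    rw [CC_of_le Q f (by omega),
      Fin.sum_univ_eq_sum_range (fun k => PD (Q k) (CC m Q (k + (m + t) - m) f))]
    refine congrArg Neg.neg (sum_congr rfl fun k _ => ?_)
    rw [show k + (m + t) - m = k + t by omega]
  have hlow : ∑ k ∈ range (m - 1 - t), PD (Q k) (CC m Q (k + t) f) = 0 :=
    sum_eq_zero fun k hk => by rw [CC_of_lt Q f (by have := mem_range.mp hk; omega), PD_zero_right]
  rw [← Ico_add_one_right_eq_Icc, sum_Ico_succ_top (by omega), hQm, PD_one, hrec,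
    ← sum_range_add_sum_Ico _ (by omega : m - 1 - t ≤ m), hlow, zero_add, add_neg_cancel]

lemma sum_Icc_PD_shift_CC_eq_zero (hQm : Q m = 1) {j s : ℕ} (hjs : j < s) (hs : s < m) :
    ∑ k ∈ Icc (m - 1 - s) (m - 1 - j), PD (Q (j + k + 1)) (CC m Q (k + s) f) = 0 :=
  calc ∑ k ∈ Icc (m - 1 - s) (m - 1 - j), PD (Q (j + k + 1)) (CC m Q (k + s) f)
      = ∑ k ∈ Icc (m - 1 - s) (m - 1 - j),
          PD (Q (k + (j + 1))) (CC m Q (k + (j + 1) + (s - j - 1)) f) :=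
        sum_congr rfl fun k _ => by
          rw [show j + k + 1 = k + (j + 1) by omega,
            show k + (j + 1) + (s - j - 1) = k + s by omega]
    _ = ∑ k ∈ Icc (m - 1 - s + (j + 1)) (m - 1 - j + (j + 1)),
          PD (Q k) (CC m Q (k + (s - j - 1)) f) := by
        rw [← map_add_right_Icc, sum_map]
        rfl
    _ = 0 := by
        rw [show m - 1 - s + (j + 1) = m - 1 - (s - j - 1) by omega,
          show m - 1 - j + (j + 1) = m by omega]
        exact sum_Icc_PD_CC_eq_zero Q f hQm _

end CC

theorem cauchy_data_identity_general {n : ℕ} (m : ℕ)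
    (Q : ℕ → MvPolynomial (Fin n) ℂ) (hQm : Q m = 1)
    (Y : Set (EuclideanSpace ℝ (Fin n)))
    (h : ℕ → EuclideanSpace ℝ (Fin n) → ℂ) :
    ∀ s < m, ∀ x ∈ Y,
      (∑ j ∈ Finset.range (s+1), ∑ k ∈ Finset.Icc (m-1-s) (m-1-j),
        PD (Q (j+k+1)) (CC m Q (k+s) (h j))) x = h s x := by
  intro s hs x _
  have hdiag :
      ∑ k ∈ Icc (m - 1 - s) (m - 1 - s), PD (Q (s + k + 1)) (CC m Q (k + s) (h s)) = h s := by
    rw [Icc_self, sum_singleton, show s + (m - 1 - s) + 1 = m by omega, hQm, PD_one,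
      CC_of_add_one_eq Q _ (by omega)]
  rw [sum_range_succ, sum_eq_zero fun j hj =>
    sum_Icc_PD_shift_CC_eq_zero Q (h j) hQm (mem_range.mp hj) hs, zero_add, hdiag]

/-- **Proposition 4.2.** For `Q_m = 1` and `h₀,…,h_{m−1} ∈ C^∞(Y)`:
`Σ_{j=0}^s Σ_{k=m−1−s}^{m−1−j} Q_{j+k+1}(D) 𝒞_{k+s}(h_j) = h_s` on `Y`
for every `0 ≤ s ≤ m−1`. -/
theorem cauchy_data_identity {n : ℕ} (hn : 1 ≤ n) (m : ℕ) (hm : 1 ≤ m)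
    (Q : ℕ → MvPolynomial (Fin n) ℂ) (hQm : Q m = 1)
    (Y : Set (EuclideanSpace ℝ (Fin n))) (hY : IsOpen Y)
    (h : ℕ → EuclideanSpace ℝ (Fin n) → ℂ)
    (hsm : ∀ j < m, ContDiffOn ℝ (⊤ : ℕ∞) (h j) Y) :
    ∀ s < m, ∀ x ∈ Y,
      (∑ j ∈ Finset.range (s+1), ∑ k ∈ Finset.Icc (m-1-s) (m-1-j),
        PD (Q (j+k+1)) (CC m Q (k+s) (h j))) x = h s x :=
  cauchy_data_identity_general m Q hQm Y h

end
end
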